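/- Let 1/2 ≤ p_d < 1 and define g : [0,1) × [0,1) → ℝ by g(x,y) = 1 if x⊖y ≤ 1/2 and g(x,y) = 2p_d − 1 if x⊖y > 1/2. Then with respect to Lebesgue measure: (i) ∫₀¹ g(x,y) dy = p_d for every x ∈ [0,1) (and likewise ∫₀¹ g(x,y) dx = p_d for every y); (ii) ∫∫∫_{[0,1)³} g(x,y) g(y,z) dx dy dz = p_d²; (iii) ∫∫∫_{[0,1)³} g(x,y) g(y,z) g(z,x) dx dy dz = p_d³. -/

import Mathlib

/-!
On `[0,1)²` we have `g(x,y) = H(x - y)` for the `1`-periodic square wave `H` equal to `1` on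
`[0,1/2]` and to `2p - 1` on `(1/2,1)`, so every integral reduces, by translation invariance of
`∫₀¹` on periodic functions, to integrals of `H`. The key fact is that `H - p` is odd almost
everywhere: `H(t) + H(-t) = 2p`. This gives `∫ H = p` at once. For the cyclic integral, the
autoconvolution `K = H ∗ H` is then even with `∫ K = p²`, and the triple integral reduces to
`J = ∫ H(-v) K(v) dv`. Replacing `H(-v)` by `2p - H(v)` and then `v` by `-v` gives
`J = 2p · p² - J`, so `J = p³`.
-/

open MeasureTheory

/-- Subtraction modulo 1 on `[0,1)`. -/
noncomputable def ominus (x y : ℝ) : ℝ := if 0 ≤ x - y then x - y else x - y + 1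

/-- The direction weight function: `g(x,y) = 1` if `x ⊖ y ≤ 1/2` and `g(x,y) = 2p_d - 1`
otherwise. -/
noncomputable def g (pd : ℝ) (x y : ℝ) : ℝ := if ominus x y ≤ 1 / 2 then 1 else 2 * pd - 1

open Function Set

namespace Function.Periodic

variable {H : ℝ → ℝ} {T : ℝ}

theorem intervalIntegral_comp_sub_right (hH : Periodic H T) (c : ℝ) :
    ∫ t in 0..T, H (t - c) = ∫ t in 0..T, H t := by
  rw [intervalIntegral.integral_comp_sub_right, zero_sub, ← neg_add_eq_sub,
    hH.intervalIntegral_add_eq (-c) 0, zero_add]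

theorem intervalIntegral_comp_sub_left (hH : Periodic H T) (c : ℝ) :
    ∫ t in 0..T, H (c - t) = ∫ t in 0..T, H t := by
  rw [intervalIntegral.integral_comp_sub_left, sub_zero]
  simpa using hH.intervalIntegral_add_eq (c - T) 0

theorem intervalIntegral_chain_eq_sq (hH : Periodic H 1) :
    ∫ x in 0..1, ∫ y in 0..1, ∫ z in 0..1, H (x - y) * H (y - z) =
      (∫ t in 0..1, H t) ^ 2 := by
  simp only [intervalIntegral.integral_const_mul, hH.intervalIntegral_comp_sub_left,
    intervalIntegral.integral_mul_const, intervalIntegral.integral_const]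
  simp [sq]

end Function.Periodic

theorem intervalIntegrable_of_norm_le {F : ℝ → ℝ} {C a b : ℝ} (hF : Measurable F)
    (hC : ∀ t, ‖F t‖ ≤ C) : IntervalIntegrable F volume a b :=
  intervalIntegrable_const.mono_fun' hF.aestronglyMeasurable (ae_of_all _ hC)

noncomputable def circleConv (F G : ℝ → ℝ) (w : ℝ) : ℝ := ∫ u in 0..1, F (w - u) * G u

section CircleConv

variable {F G : ℝ → ℝ} {C D : ℝ}

theorem periodic_circleConv (hF : Periodic F 1) : Periodic (circleConv F G) 1 := fun w => by
  simp only [circleConv, add_sub_right_comm, hF _]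

theorem measurable_circleConv (hF : Measurable F) (hG : Measurable G) :
    Measurable (circleConv F G) := by
  have hFG : StronglyMeasurable (uncurry fun w u => F (w - u) * G u) :=
    ((hF.comp (measurable_fst.sub measurable_snd)).mul (hG.comp measurable_snd)).stronglyMeasurable
  have hIoc : circleConv F G = fun w => ∫ u, F (w - u) * G u ∂volume.restrict (Ioc 0 1) := by
    funext w
    exact intervalIntegral.integral_of_le zero_le_one
  rw [hIoc]
  exact (hFG.integral_prod_right (ν := volume.restrict (Ioc 0 1))).measurable

theorem norm_circleConv_le (hF : ∀ t, ‖F t‖ ≤ C) (hG : ∀ t, ‖G t‖ ≤ D) (w : ℝ) :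
    ‖circleConv F G w‖ ≤ C * D := by
  unfold circleConv
  have hCD : ∀ u ∈ uIoc (0 : ℝ) 1, ‖F (w - u) * G u‖ ≤ C * D := fun u _ =>
    norm_mul_le_of_le (hF _) (hG u)
  simpa using intervalIntegral.norm_integral_le_of_norm_le_const hCD

theorem intervalIntegral_circleConv (hF : Periodic F 1) (hFm : Measurable F) (hGm : Measurable G)
    (hFC : ∀ t, ‖F t‖ ≤ C) (hGD : ∀ t, ‖G t‖ ≤ D) :
    ∫ w in 0..1, circleConv F G w = (∫ t in 0..1, F t) * ∫ t in 0..1, G t := by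
  have hint : IntegrableOn (uncurry fun w u => F (w - u) * G u) (uIoc 0 1 ×ˢ uIoc 0 1) := by
    refine Measure.integrableOn_of_bounded (M := C * D) ?_ ?_ (ae_of_all _ fun x => ?_)
    · rw [uIoc_of_le zero_le_one]
      exact ((Metric.isBounded_Ioc 0 1).prod (Metric.isBounded_Ioc 0 1)).measure_lt_top.ne
    · exact ((hFm.comp (measurable_fst.sub measurable_snd)).mul
        (hGm.comp measurable_snd)).aestronglyMeasurable
    · exact norm_mul_le_of_le (hFC _) (hGD _)
  calc ∫ w in 0..1, circleConv F G w
      = ∫ u in 0..1, (∫ w in 0..1, F (w - u)) * G u := by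
        simp only [circleConv]
        rw [intervalIntegral_intervalIntegral_swap hint]
        simp only [intervalIntegral.integral_mul_const]
    _ = (∫ t in 0..1, F t) * ∫ t in 0..1, G t := by
        simp only [hF.intervalIntegral_comp_sub_right, intervalIntegral.integral_const_mul]

end CircleConv

section Symmetric

variable {H : ℝ → ℝ} {C p : ℝ}

theorem Function.Periodic.intervalIntegral_eq_of_add_comp_neg (hH : Periodic H 1)
    (hHm : Measurable H) (hHC : ∀ t, ‖H t‖ ≤ C) (hsymm : ∀ᵐ t, H t + H (-t) = 2 * p) :
    ∫ t in 0..1, H t = p := by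
  have hneg : ∫ t in 0..1, H (-t) = ∫ t in 0..1, H t := by
    simpa using hH.intervalIntegral_comp_sub_left 0
  have hsum : ∫ t in 0..1, (H t + H (-t)) = 2 * p := by
    rw [intervalIntegral.integral_congr_ae (g := fun _ => 2 * p) (hsymm.mono fun t ht _ => ht)]
    simp
  have hHneg : IntervalIntegrable (fun t => H (-t)) volume 0 1 :=
    intervalIntegrable_of_norm_le (hHm.comp measurable_neg) fun t => hHC (-t)
  rw [intervalIntegral.integral_add (intervalIntegrable_of_norm_le hHm hHC) hHneg, hneg] at hsum
  linarith

theorem circleConv_self_neg (hH : Periodic H 1) (hHm : Measurable H) (hHC : ∀ t, ‖H t‖ ≤ C)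
    (hsymm : ∀ᵐ t, H t + H (-t) = 2 * p) (w : ℝ) :
    circleConv H H (-w) = circleConv H H w := by
  have hmean := hH.intervalIntegral_eq_of_add_comp_neg hHm hHC hsymm
  have hrefl : circleConv H H (-w) = ∫ u in 0..1, H (u - w) * H (-u) := by
    have := ((hH.const_sub (-w)).mul hH).intervalIntegral_comp_sub_left 0
    simp only [Pi.mul_apply, zero_sub, sub_neg_eq_add, neg_add_eq_sub] at this
    exact this.symm
  have hae : ∀ᵐ u, u ∈ uIoc (0 : ℝ) 1 →
      H (u - w) * H (-u) = H (w - u) * H u + 2 * p * (2 * p - H (w - u) - H u) := by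
    filter_upwards [(quasiMeasurePreserving_sub_left volume w).ae hsymm, hsymm] with u h1 h2 _
    rw [neg_sub] at h1
    linear_combination H (-u) * h1 + (2 * p - H (w - u)) * h2
  have hHw : IntervalIntegrable (fun u => H (w - u)) volume 0 1 :=
    intervalIntegrable_of_norm_le (hHm.comp (measurable_const.sub measurable_id)) fun u => hHC _
  have hH1 : IntervalIntegrable H volume 0 1 := intervalIntegrable_of_norm_le hHm hHC
  have hprod : IntervalIntegrable (fun u => H (w - u) * H u) volume 0 1 :=
    intervalIntegrable_of_norm_le ((hHm.comp (measurable_const.sub measurable_id)).mul hHm)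
      fun u => norm_mul_le_of_le (hHC _) (hHC u)
  rw [hrefl, intervalIntegral.integral_congr_ae hae,
    intervalIntegral.integral_add hprod (((intervalIntegrable_const.sub hHw).sub hH1).const_mul _),
    intervalIntegral.integral_const_mul,
    intervalIntegral.integral_sub (intervalIntegrable_const.sub hHw) hH1,
    intervalIntegral.integral_sub intervalIntegrable_const hHw, hH.intervalIntegral_comp_sub_left,
    hmean]
  simp only [circleConv, intervalIntegral.integral_const, sub_zero, one_smul]
  ring

theorem intervalIntegral_comp_neg_mul_circleConv_self (hH : Periodic H 1) (hHm : Measurable H)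
    (hHC : ∀ t, ‖H t‖ ≤ C) (hsymm : ∀ᵐ t, H t + H (-t) = 2 * p) :
    ∫ v in 0..1, H (-v) * circleConv H H v = p ^ 3 := by
  set K := circleConv H H
  have hK : Periodic K 1 := periodic_circleConv hH
  have hKm : Measurable K := measurable_circleConv hHm hHm
  have hKC : ∀ w, ‖K w‖ ≤ C * C := norm_circleConv_le hHC hHC
  have hKint : ∫ w in 0..1, K w = (∫ t in 0..1, H t) * ∫ t in 0..1, H t :=
    intervalIntegral_circleConv hH hHm hHm hHC hHC
  have hKeven : ∀ w, K (-w) = K w := circleConv_self_neg hH hHm hHC hsymm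
  have hflip : ∫ v in 0..1, H v * K v = ∫ v in 0..1, H (-v) * K v := by
    have := (hH.mul hK).intervalIntegral_comp_sub_left 0
    simp only [Pi.mul_apply, zero_sub, hKeven] at this
    exact this.symm
  have hsplit : ∫ v in 0..1, H (-v) * K v
      = 2 * p * (∫ v in 0..1, K v) - ∫ v in 0..1, H v * K v := by
    have hae : ∀ᵐ v, v ∈ uIoc (0 : ℝ) 1 → H (-v) * K v = 2 * p * K v - H v * K v := by
      filter_upwards [hsymm] with v hv _
      linear_combination K v * hv
    rw [intervalIntegral.integral_congr_ae hae, intervalIntegral.integral_sub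
      (f := fun v => 2 * p * K v) (g := fun v => H v * K v)
      ((intervalIntegrable_of_norm_le hKm hKC).const_mul (2 * p))
      (intervalIntegrable_of_norm_le (hHm.mul hKm) fun v => norm_mul_le_of_le (hHC v) (hKC v)),
      intervalIntegral.integral_const_mul]
  rw [hKint, hH.intervalIntegral_eq_of_add_comp_neg hHm hHC hsymm, hflip] at hsplit
  linear_combination hsplit / 2

theorem Function.Periodic.intervalIntegral_cycle_eq_cube (hH : Periodic H 1) (hHm : Measurable H)
    (hHC : ∀ t, ‖H t‖ ≤ C) (hsymm : ∀ᵐ t, H t + H (-t) = 2 * p) :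
    ∫ x in 0..1, ∫ y in 0..1, ∫ z in 0..1, H (x - y) * H (y - z) * H (z - x) = p ^ 3 := by
  have hinner : ∀ x y, ∫ z in 0..1, H (x - y) * H (y - z) * H (z - x) =
      H (x - y) * circleConv H H (y - x) := by
    intro x y
    simp only [mul_assoc, intervalIntegral.integral_const_mul]
    congr 1
    have := ((hH.const_sub (y - x)).mul hH).intervalIntegral_comp_sub_right x
    simp only [Pi.mul_apply, sub_sub_sub_cancel_right] at this
    exact this
  have hmiddle : ∀ x, ∫ y in 0..1, H (x - y) * circleConv H H (y - x) =
      ∫ v in 0..1, H (-v) * circleConv H H v := by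
    intro x
    have hHneg : Periodic (fun v => H (-v)) 1 := by simpa using hH.const_sub 0
    simpa only [Pi.mul_apply, neg_sub] using
      (hHneg.mul (periodic_circleConv (G := H) hH)).intervalIntegral_comp_sub_right x
  simp only [hinner, hmiddle, intervalIntegral.integral_const, sub_zero, one_smul]
  exact intervalIntegral_comp_neg_mul_circleConv_self hH hHm hHC hsymm

end Symmetric

theorem setIntegral_Ico_eq_intervalIntegral_of_eqOn {f f' : ℝ → ℝ} {a b : ℝ} (hab : a ≤ b)
    (h : EqOn f f' (Ico a b)) : ∫ t in Ico a b, f t = ∫ t in a..b, f' t := by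
  rw [setIntegral_congr_fun measurableSet_Ico h, intervalIntegral.integral_of_le hab,
    integral_Ico_eq_integral_Ioc]

theorem ominus_eq_fract {x y : ℝ} (hx : x ∈ Ico (0 : ℝ) 1) (hy : y ∈ Ico (0 : ℝ) 1) :
    ominus x y = Int.fract (x - y) := by
  obtain ⟨hx0, hx1⟩ := hx
  obtain ⟨hy0, hy1⟩ := hy
  unfold ominus
  split_ifs with h
  · exact (Int.fract_eq_self.2 ⟨h, by linarith⟩).symm
  · rw [← Int.fract_add_one, Int.fract_eq_self.2 ⟨by linarith, by linarith⟩]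

noncomputable def squareWave (pd t : ℝ) : ℝ := if Int.fract t ≤ 1 / 2 then 1 else 2 * pd - 1

section SquareWave

variable {pd : ℝ}

theorem g_eq_squareWave {x y : ℝ} (hx : x ∈ Ico (0 : ℝ) 1) (hy : y ∈ Ico (0 : ℝ) 1) :
    g pd x y = squareWave pd (x - y) := by
  rw [g, squareWave, ominus_eq_fract hx hy]

theorem periodic_squareWave : Periodic (squareWave pd) 1 := fun t => by
  simp only [squareWave, Int.fract_add_one]

theorem measurable_squareWave : Measurable (squareWave pd) :=
  Measurable.ite (measurableSet_le measurable_fract measurable_const) measurable_const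
    measurable_const

theorem norm_squareWave_le (t : ℝ) : ‖squareWave pd t‖ ≤ max 1 |2 * pd - 1| := by
  unfold squareWave
  split_ifs <;> simp

theorem squareWave_add_squareWave_neg :
    ∀ᵐ t, squareWave pd t + squareWave pd (-t) = 2 * pd := by
  filter_upwards [(countable_range fun n : ℤ => (n : ℝ) / 2).ae_notMem volume] with t ht
  have hfloor := Int.floor_add_fract t
  have h0 : Int.fract t ≠ 0 := fun h => ht ⟨2 * ⌊t⌋, by push_cast; linarith⟩
  have hhalf : Int.fract t ≠ 1 / 2 := fun h => ht ⟨2 * ⌊t⌋ + 1, by push_cast; linarith⟩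
  unfold squareWave
  rw [Int.fract_neg h0]
  split_ifs <;> first | ring1 | exact absurd (by linarith) hhalf

end SquareWave

theorem stmt17_general {pd : ℝ} :
    (∀ x ∈ Set.Ico (0 : ℝ) 1, (∫ y in Set.Ico (0 : ℝ) 1, g pd x y) = pd) ∧
    (∀ y ∈ Set.Ico (0 : ℝ) 1, (∫ x in Set.Ico (0 : ℝ) 1, g pd x y) = pd) ∧
    (∫ x in Set.Ico (0 : ℝ) 1, ∫ y in Set.Ico (0 : ℝ) 1, ∫ z in Set.Ico (0 : ℝ) 1,
        g pd x y * g pd y z) = pd ^ 2 ∧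
    (∫ x in Set.Ico (0 : ℝ) 1, ∫ y in Set.Ico (0 : ℝ) 1, ∫ z in Set.Ico (0 : ℝ) 1,
        g pd x y * g pd y z * g pd z x) = pd ^ 3 := by
  have hH : Periodic (squareWave pd) 1 := periodic_squareWave
  have hmean : ∫ t in 0..1, squareWave pd t = pd :=
    hH.intervalIntegral_eq_of_add_comp_neg measurable_squareWave norm_squareWave_le
      squareWave_add_squareWave_neg
  have hIco {f f' : ℝ → ℝ} (h : EqOn f f' (Ico 0 1)) :=
    setIntegral_Ico_eq_intervalIntegral_of_eqOn zero_le_one h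
  refine ⟨fun x hx => ?_, fun y hy => ?_, ?_, ?_⟩
  · rw [hIco fun y hy => g_eq_squareWave hx hy, hH.intervalIntegral_comp_sub_left, hmean]
  · rw [hIco fun x hx => g_eq_squareWave hx hy, hH.intervalIntegral_comp_sub_right, hmean]
  · rw [hIco fun x hx => hIco fun y hy => hIco fun z hz => by
      rw [g_eq_squareWave hx hy, g_eq_squareWave hy hz], hH.intervalIntegral_chain_eq_sq,
      hmean]
  · rw [hIco fun x hx => hIco fun y hy => hIco fun z hz => by
      rw [g_eq_squareWave hx hy, g_eq_squareWave hy hz, g_eq_squareWave hz hx]]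
    exact hH.intervalIntegral_cycle_eq_cube measurable_squareWave norm_squareWave_le
      squareWave_add_squareWave_neg

/-- Integrals of the direction weight function `g` over `[0,1)` with respect to Lebesgue
measure: the single, double-composition and cyclic triple-composition integrals equal
`p_d`, `p_d²` and `p_d³`, respectively. -/
theorem stmt17 {pd : ℝ} (hpd0 : 1 / 2 ≤ pd) (hpd1 : pd < 1) :
    (∀ x ∈ Set.Ico (0 : ℝ) 1, (∫ y in Set.Ico (0 : ℝ) 1, g pd x y) = pd) ∧
    (∀ y ∈ Set.Ico (0 : ℝ) 1, (∫ x in Set.Ico (0 : ℝ) 1, g pd x y) = pd) ∧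
    (∫ x in Set.Ico (0 : ℝ) 1, ∫ y in Set.Ico (0 : ℝ) 1, ∫ z in Set.Ico (0 : ℝ) 1,
        g pd x y * g pd y z) = pd ^ 2 ∧
    (∫ x in Set.Ico (0 : ℝ) 1, ∫ y in Set.Ico (0 : ℝ) 1, ∫ z in Set.Ico (0 : ℝ) 1,
        g pd x y * g pd y z * g pd z x) = pd ^ 3 :=
  stmt17_general
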